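/- arXiv:2603.07092 — 3 statements merged into one kernel-verified Lean document; each statement's English description precedes it below -/
import Mathlib

section
/- Let S^{(1)}, …, S^{(K)}, S^{(K+1)} be exchangeable real-valued random variables, let α ∈ (0,1), and suppose K ≥ ⌈(1−α)(K+1)⌉. Let q be the ⌈(1−α)(K+1)⌉-th smallest value among S^{(1)}, …, S^{(K)}. Then Pr(S^{(K+1)} ≤ q) ≥ 1 − α. -/
open MeasureTheory Finset ENNReal

/-- The `j`-th smallest value (1-indexed) of a finite family of reals. -/
noncomputable def orderStat {K : ℕ} (s : Fin K → ℝ) (j : ℕ) : ℝ :=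
  ((List.ofFn s).mergeSort (· ≤ ·)).getD (j - 1) 0


lemma countP_ofFn' {n : ℕ} (x : Fin n → ℝ) (P : ℝ → Prop) [DecidablePred P] :
    (List.ofFn x).countP (fun a => decide (P a)) = (Finset.univ.filter fun i => P (x i)).card := by
  induction n with
  | zero => simp
  | succ n ih =>
      rw [List.ofFn_succ, List.countP_cons, Fin.card_filter_univ_succ' (fun i => P (x i))]
      simp [ih, add_comm]

lemma sorted_countP_le_iff {L : List ℝ} (hL : L.Pairwise (· ≤ ·)) {m : ℕ} (hm : m < L.length)
    (t : ℝ) : t ≤ L.getD m 0 ↔ L.countP (fun a => decide (a < t)) ≤ m := by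
  have hget : L.getD m 0 = L[m] := List.getD_eq_getElem L 0 hm
  constructor
  · intro h
    rw [hget] at h
    have hsplit : L.countP (fun a => decide (a < t)) =
        (L.take m).countP (fun a => decide (a < t)) + (L.drop m).countP (fun a => decide (a < t)) := by
      conv_lhs => rw [← List.take_append_drop m L]
      exact List.countP_append
    have h1 : (L.take m).countP (fun a => decide (a < t)) ≤ m :=
      le_trans List.countP_le_length (by simp)
    have h2 : (L.drop m).countP (fun a => decide (a < t)) = 0 := by
      rw [List.countP_eq_zero]
      intro a ha
      obtain ⟨k, hk, hke⟩ := List.getElem_of_mem ha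
      rw [List.getElem_drop] at hke
      have hmk : m + k < L.length := by
        simp [List.length_drop] at hk; omega
      have hle : L.get ⟨m, hm⟩ ≤ L.get ⟨m + k, hmk⟩ := hL.rel_get_of_le (by simp)
      simp only [List.get_eq_getElem] at hle
      rw [hke] at hle
      simp only [decide_eq_true_eq]
      push_neg
      linarith
    omega
  · intro h
    by_contra hcon
    push_neg at hcon
    rw [hget] at hcon
    have hall : ∀ a ∈ L.take (m + 1), (fun a => decide (a < t)) a = true := by
      intro a ha
      obtain ⟨k, hk, hke⟩ := List.mem_take_iff_getElem.1 ha
      obtain ⟨hk1, hk2⟩ := lt_min_iff.1 hk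
      have hle : L.get ⟨k, hk2⟩ ≤ L.get ⟨m, hm⟩ :=
        hL.rel_get_of_le (by simp; omega)
      simp only [List.get_eq_getElem] at hle
      rw [← hke]
      simp only [decide_eq_true_eq]
      linarith
    have hcnt : (L.take (m+1)).countP (fun a => decide (a < t)) = (L.take (m+1)).length :=
      List.countP_eq_length.2 hall
    have hlen : (L.take (m+1)).length = m + 1 := by
      simp [List.length_take]; omega
    have hge : m + 1 ≤ L.countP (fun a => decide (a < t)) := by
      conv_rhs => rw [← List.take_append_drop (m+1) L, List.countP_append]
      omega
    omega

lemma le_orderStat_iff {K : ℕ} (s : Fin K → ℝ) {j : ℕ} (hj1 : 1 ≤ j) (hjK : j ≤ K) (t : ℝ) :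
    t ≤ orderStat s j ↔ (Finset.univ.filter fun l => s l < t).card ≤ j - 1 := by
  have hlen : ((List.ofFn s).mergeSort (· ≤ ·)).length = K := by
    simp [List.length_mergeSort]
  have hs : ((List.ofFn s).mergeSort (· ≤ ·)).Pairwise (· ≤ ·) := (List.pairwise_mergeSort (le := fun a b : ℝ => decide (a ≤ b)) (fun a b c h1 h2 => by simp only [decide_eq_true_eq] at *; exact le_trans h1 h2) (fun a b => by simpa using le_total a b) _).imp (fun h => by simpa using h)
  rw [orderStat, sorted_countP_le_iff hs (by omega) t,
    (List.mergeSort_perm (List.ofFn s) _).countP_eq, countP_ofFn']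

lemma key_count {n : ℕ} (x : Fin n → ℝ) {j : ℕ} (hj1 : 1 ≤ j) (hjn : j ≤ n) :
    j ≤ (Finset.univ.filter fun i =>
      (Finset.univ.filter fun l => x l < x i).card ≤ j - 1).card := by
  set L := (List.ofFn x).mergeSort (· ≤ ·) with hL
  have hlen : L.length = n := by simp [hL, List.length_mergeSort]
  have hs : L.Pairwise (· ≤ ·) := (List.pairwise_mergeSort (le := fun a b : ℝ => decide (a ≤ b)) (fun a b c h1 h2 => by simp only [decide_eq_true_eq] at *; exact le_trans h1 h2) (fun a b => by simpa using le_total a b) _).imp (fun h => by simpa using h)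
  set v := L.getD (j - 1) 0 with hv
  have hperm := List.mergeSort_perm (List.ofFn x) (fun a b : ℝ => a ≤ b)
  have hvcnt : (Finset.univ.filter fun l => x l < v).card ≤ j - 1 := by
    rw [← countP_ofFn' x (fun a => a < v), ← hperm.countP_eq]
    exact (sorted_countP_le_iff hs (by omega) v).1 le_rfl
  have hsub : (Finset.univ.filter fun i => x i ≤ v) ⊆
      (Finset.univ.filter fun i => (Finset.univ.filter fun l => x l < x i).card ≤ j - 1) := by
    intro i hi
    simp only [mem_filter, mem_univ, true_and] at hi ⊢
    refine le_trans (Finset.card_le_card ?_) hvcnt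
    intro l hl
    simp only [mem_filter, mem_univ, true_and] at hl ⊢
    linarith
  refine le_trans ?_ (Finset.card_le_card hsub)
  -- card {i | x i ≤ v} = L.countP (· ≤ v) ≥ j
  rw [← countP_ofFn' x (fun a => a ≤ v), ← hperm.countP_eq]
  have hall : ∀ a ∈ L.take j, (fun a => decide (a ≤ v)) a = true := by
    intro a ha
    obtain ⟨k, hk, hke⟩ := List.mem_take_iff_getElem.1 ha
    obtain ⟨hk1, hk2⟩ := lt_min_iff.1 hk
    have hjlen : j - 1 < L.length := by omega
    have hle : L.get ⟨k, hk2⟩ ≤ L.get ⟨j - 1, hjlen⟩ := hs.rel_get_of_le (by simp; omega)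
    simp only [List.get_eq_getElem] at hle
    rw [← hke]
    simp only [decide_eq_true_eq]
    rw [hv, List.getD_eq_getElem L 0 hjlen]
    exact hle
  have hcnt : (L.take j).countP (fun a => decide (a ≤ v)) = (L.take j).length :=
    List.countP_eq_length.2 hall
  have hlent : (L.take j).length = j := by simp [List.length_take]; omega
  rw [← hL]
  conv_rhs => rw [← List.take_append_drop j L, List.countP_append]
  omega

/-- vanilla conformal prediction coverage guarantee for
exchangeable random variables. -/
theorem stmt2 {Ω : Type*} [MeasurableSpace Ω] (μ : Measure Ω) [IsProbabilityMeasure μ]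
    (K : ℕ) (S : Fin (K + 1) → Ω → ℝ) (hS : ∀ i, Measurable (S i))
    (hexch : ∀ σ : Equiv.Perm (Fin (K + 1)),
      Measure.map (fun ω i => S (σ i) ω) μ = Measure.map (fun ω i => S i ω) μ)
    (α : ℝ) (hα : 0 < α) (hα1 : α < 1)
    (hK : ⌈(1 - α) * (K + 1)⌉₊ ≤ K) :
    ENNReal.ofReal (1 - α) ≤
      μ {ω | S (Fin.last K) ω ≤
        orderStat (fun i : Fin K => S i.castSucc ω) ⌈(1 - α) * (K + 1)⌉₊} := by
  classical
  set j := ⌈(1 - α) * (K + 1)⌉₊ with hjdef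
  have hpos : (0:ℝ) < (1 - α) * (K + 1) := by
    have : (0:ℝ) < (K:ℝ) + 1 := by positivity
    nlinarith
  have hj1 : 1 ≤ j := Nat.one_le_ceil_iff.2 hpos
  set Φ : Ω → (Fin (K + 1) → ℝ) := fun ω i => S i ω with hΦ
  have hΦm : Measurable Φ := measurable_pi_lambda _ hS
  set C : Fin (K + 1) → Set (Fin (K + 1) → ℝ) :=
    fun i => {x | (Finset.univ.filter fun l => x l < x i).card ≤ j - 1} with hC
  have hcardm : ∀ i : Fin (K+1), Measurable fun x : Fin (K + 1) → ℝ =>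
      (Finset.univ.filter fun l => x l < x i).card := by
    intro i
    simp_rw [Finset.card_filter]
    exact Finset.measurable_sum _ fun l _ =>
      Measurable.ite (measurableSet_lt (measurable_pi_apply l) (measurable_pi_apply i))
        measurable_const measurable_const
  have hCm : ∀ i, MeasurableSet (C i) := fun i =>
    (hcardm i) (measurableSet_Iic (a := j - 1))
  -- all preimage measures equal
  have hmeas_eq : ∀ i, μ (Φ ⁻¹' C i) = μ (Φ ⁻¹' C (Fin.last K)) := by
    intro i
    set σ := Equiv.swap i (Fin.last K) with hσ
    have hre : Measurable fun x : Fin (K + 1) → ℝ => fun l => x (σ l) :=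
      measurable_pi_lambda _ fun l => measurable_pi_apply _
    have hpre : (fun x : Fin (K + 1) → ℝ => fun l => x (σ l)) ⁻¹' C (Fin.last K) = C i := by
      ext x
      simp only [hC, Set.mem_preimage, Set.mem_setOf_eq]
      have h1 : σ (Fin.last K) = i := Equiv.swap_apply_right _ _
      simp only [h1]
      have h2 : (Finset.univ.filter fun l => x (σ l) < x i).card
          = (Finset.univ.filter fun l => x l < x i).card := by
        apply Finset.card_bij (fun l _ => σ l)
        · intro l hl; simp only [mem_filter, mem_univ, true_and] at hl ⊢; exact hl
        · intro a _ b _ hab; exact σ.injective hab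
        · intro b hb
          refine ⟨σ.symm b, ?_, by simp⟩
          simp only [mem_filter, mem_univ, true_and] at hb ⊢
          simpa using hb
      rw [h2]
    have hcomp : (fun ω l => S (σ l) ω) = (fun x : Fin (K+1) → ℝ => fun l => x (σ l)) ∘ Φ := rfl
    calc μ (Φ ⁻¹' C i)
        = μ ((fun ω l => S (σ l) ω) ⁻¹' C (Fin.last K)) := by
          rw [hcomp, Set.preimage_comp, hpre]
      _ = Measure.map (fun ω l => S (σ l) ω) μ (C (Fin.last K)) := by
          rw [Measure.map_apply (measurable_pi_lambda _ fun l => hS (σ l)) (hCm _)]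
      _ = Measure.map Φ μ (C (Fin.last K)) := by rw [hexch σ]
      _ = μ (Φ ⁻¹' C (Fin.last K)) := Measure.map_apply hΦm (hCm _)
  -- sum bound
  have hkey : (j : ℝ≥0∞) ≤ ∑ i : Fin (K + 1), μ (Φ ⁻¹' C i) := by
    have hptwise : ∀ ω, (j : ℝ≥0∞) ≤
        ∑ i : Fin (K + 1), (Φ ⁻¹' C i).indicator (fun _ => (1 : ℝ≥0∞)) ω := by
      intro ω
      have h1 : ∑ i : Fin (K + 1), (Φ ⁻¹' C i).indicator (fun _ => (1 : ℝ≥0∞)) ω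
          = ((Finset.univ.filter fun i => Φ ω ∈ C i).card : ℝ≥0∞) := by
        rw [Finset.card_filter]
        push_cast
        refine Finset.sum_congr rfl fun i _ => ?_
        simp [Set.indicator_apply, Set.mem_preimage]
      simp only [h1]
      have := key_count (Φ ω) hj1 (le_trans hK (Nat.le_succ K))
      exact_mod_cast this
    calc (j : ℝ≥0∞) = ∫⁻ _, (j : ℝ≥0∞) ∂μ := by simp
      _ ≤ ∫⁻ ω, ∑ i : Fin (K + 1), (Φ ⁻¹' C i).indicator (fun _ => (1 : ℝ≥0∞)) ω ∂μ :=
          lintegral_mono hptwise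
      _ = ∑ i : Fin (K + 1), ∫⁻ ω, (Φ ⁻¹' C i).indicator (fun _ => (1 : ℝ≥0∞)) ω ∂μ :=
          lintegral_finset_sum _ fun i _ =>
            (measurable_const.indicator (hΦm (hCm i)))
      _ = ∑ i : Fin (K + 1), μ (Φ ⁻¹' C i) := by
          refine Finset.sum_congr rfl fun i _ => ?_
          rw [lintegral_indicator_const (hΦm (hCm i)), one_mul]
  rw [Finset.sum_congr rfl (fun i _ => hmeas_eq i), Finset.sum_const, Finset.card_univ,
    Fintype.card_fin, nsmul_eq_mul] at hkey
  push_cast at hkey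
  -- goal set equals Φ ⁻¹' C last
  have hgoal : {ω | S (Fin.last K) ω ≤
      orderStat (fun i : Fin K => S i.castSucc ω) j} = Φ ⁻¹' C (Fin.last K) := by
    ext ω
    simp only [Set.mem_setOf_eq, Set.mem_preimage, hC, hΦ]
    rw [le_orderStat_iff _ hj1 hK]
    have : (Finset.univ.filter fun l : Fin K => S l.castSucc ω < S (Fin.last K) ω).card
        = (Finset.univ.filter fun l : Fin (K + 1) => S l ω < S (Fin.last K) ω).card := by
      rw [Finset.card_filter, Finset.card_filter, Fin.sum_univ_castSucc]
      simp
    rw [this]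
  rw [hgoal]
  -- final arithmetic
  have hle : ENNReal.ofReal (1 - α) * ((K : ℝ≥0∞) + 1) ≤ ((K : ℝ≥0∞) + 1) * μ (Φ ⁻¹' C (Fin.last K)) := by
    refine le_trans ?_ hkey
    have h2 : ENNReal.ofReal ((1 - α) * (K + 1)) ≤ (j : ℝ≥0∞) := by
      rw [← ENNReal.ofReal_natCast]
      exact ENNReal.ofReal_le_ofReal (Nat.le_ceil _)
    have h3 : ENNReal.ofReal ((1 - α) * (K + 1)) = ENNReal.ofReal (1 - α) * ((K : ℝ≥0∞) + 1) := by
      rw [ENNReal.ofReal_mul (by linarith), ENNReal.ofReal_add (by positivity) zero_le_one,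
        ENNReal.ofReal_natCast, ENNReal.ofReal_one]
    exact h3 ▸ h2
  have hKne : ((K : ℝ≥0∞) + 1) ≠ 0 := by simp
  have hKnt : ((K : ℝ≥0∞) + 1) ≠ ⊤ := by simp [ENNReal.add_ne_top]
  rw [mul_comm (ENNReal.ofReal (1 - α)) _] at hle
  exact (ENNReal.mul_le_mul_iff_right hKne hKnt).1 hle
end

section
/- Let O ⊆ ℝⁿ be a closed convex set with nonempty interior, x̄ ∉ O, let d(x̄) = dist(x̄, O) > 0 be the distance to O, and let n = (x̄ − x̆)/d(x̄) where x̆ is the projection of x̄ onto O. Let W be symmetric positive definite. If d(x̄) − √(nᵀ W n) ≥ 0, then every x with (x − x̄)ᵀ W⁻¹ (x − x̄) ≤ 1 satisfies x ∉ interior(O). -/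
open Matrix Metric RealInnerProductSpace

lemma inner_eq_dot {n : ℕ} (a b : EuclideanSpace ℝ (Fin n)) :
    (inner ℝ a b : ℝ) = (a : Fin n → ℝ) ⬝ᵥ (b : Fin n → ℝ) := by
  simp [PiLp.inner_apply, dotProduct, RCLike.inner_apply, mul_comm]

lemma dot_sq_le {n : ℕ} (a b : Fin n → ℝ) :
    (a ⬝ᵥ b)^2 ≤ (a ⬝ᵥ a) * (b ⬝ᵥ b) := by
  have := real_inner_mul_inner_self_le
    ((EuclideanSpace.equiv (Fin n) ℝ).symm a) ((EuclideanSpace.equiv (Fin n) ℝ).symm b)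
  rw [inner_eq_dot, inner_eq_dot, inner_eq_dot] at this
  simpa [sq] using this

lemma mdot {n : ℕ} (A : Matrix (Fin n) (Fin n) ℝ) (x y : Fin n → ℝ) :
    (A.mulVec x) ⬝ᵥ y = x ⬝ᵥ (Aᵀ.mulVec y) := by
  rw [dotProduct_comm, dotProduct_mulVec, ← Matrix.mulVec_transpose, dotProduct_comm]

lemma gen_CS {n : ℕ} {W : Matrix (Fin n) (Fin n) ℝ} (hW : W.PosDef) (a b : Fin n → ℝ) :
    (a ⬝ᵥ b)^2 ≤ (a ⬝ᵥ W.mulVec a) * (b ⬝ᵥ W⁻¹.mulVec b) := by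
  classical
  open scoped MatrixOrder in
  set S := CFC.sqrt W with hSdef
  open scoped MatrixOrder in
  have hSS : S * S = W := CFC.sqrt_mul_sqrt_self W hW.posSemidef.nonneg
  open scoped MatrixOrder in
  have hSsym : Sᵀ = S := (CFC.sqrt_nonneg W).posSemidef.1
  have hdetS : IsUnit S.det := by
    have h2 : S.det * S.det = W.det := by rw [← det_mul, hSS]
    refine isUnit_iff_ne_zero.2 fun h => ?_
    rw [h, mul_zero] at h2; exact hW.det_pos.ne' h2.symm
  have hSinv : S * S⁻¹ = 1 := mul_nonsing_inv S hdetS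
  have hWinv : S⁻¹ * S⁻¹ = W⁻¹ := by
    rw [← hSS, Matrix.mul_inv_rev]
  have hSinvT : S⁻¹ᵀ = S⁻¹ := by rw [transpose_nonsing_inv, hSsym]
  have hab : a ⬝ᵥ b = (S.mulVec a) ⬝ᵥ (S⁻¹.mulVec b) := by
    rw [mdot, hSsym, mulVec_mulVec, hSinv, one_mulVec]
  have ha : (S.mulVec a) ⬝ᵥ (S.mulVec a) = a ⬝ᵥ W.mulVec a := by
    rw [mdot, hSsym, mulVec_mulVec, hSS]
  have hb : (S⁻¹.mulVec b) ⬝ᵥ (S⁻¹.mulVec b) = b ⬝ᵥ W⁻¹.mulVec b := by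
    rw [mdot, hSinvT, mulVec_mulVec, hWinv]
  rw [hab, ← ha, ← hb]
  exact dot_sq_le _ _

/-- obstacle-avoidance constraint tightening: when the tightened
signed-distance condition holds, the whole confidence ellipsoid avoids the
(interior of the) convex obstacle. -/
theorem stmt8 {n : ℕ} (O : Set (EuclideanSpace ℝ (Fin n)))
    (hOclosed : IsClosed O) (hOconv : Convex ℝ O) (hOint : (interior O).Nonempty)
    (xbar : EuclideanSpace ℝ (Fin n)) (hxbar : xbar ∉ O)
    (d : ℝ) (hd : d = Metric.infDist xbar O) (hdpos : 0 < d)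
    (xbreve : EuclideanSpace ℝ (Fin n)) (hxbreve : xbreve ∈ O)
    (hproj : dist xbar xbreve = Metric.infDist xbar O)
    (nvec : EuclideanSpace ℝ (Fin n)) (hnvec : nvec = d⁻¹ • (xbar - xbreve))
    (W : Matrix (Fin n) (Fin n) ℝ) (hW : W.PosDef)
    (htight : 0 ≤ d - Real.sqrt ((nvec : Fin n → ℝ) ⬝ᵥ W.mulVec (nvec : Fin n → ℝ))) :
    ∀ x : EuclideanSpace ℝ (Fin n),
      ((x - xbar : EuclideanSpace ℝ (Fin n)) : Fin n → ℝ) ⬝ᵥ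
        W⁻¹.mulVec ((x - xbar : EuclideanSpace ℝ (Fin n)) : Fin n → ℝ) ≤ 1 →
      x ∉ interior O := by
  intro x hx hxint
  set u : EuclideanSpace ℝ (Fin n) := xbar - xbreve with hu
  have hnorm_u : ‖u‖ = d := by rw [hu, ← dist_eq_norm, hproj, ← hd]
  -- separating hyperplane from projection characterization
  have hiInf : ‖xbar - xbreve‖ = ⨅ w : O, ‖xbar - w‖ := by
    rw [← dist_eq_norm, hproj, Metric.infDist_eq_iInf]
    simp [dist_eq_norm]
  have hsep : ∀ y ∈ O, ⟪xbar - xbreve, y - xbreve⟫ ≤ 0 :=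
    (norm_eq_iInf_iff_real_inner_le_zero hOconv hxbreve).1 hiInf
  -- strict separation at an interior point
  obtain ⟨ε, hε, hball⟩ := Metric.isOpen_iff.1 isOpen_interior x hxint
  set t : ℝ := ε / (2 * d) with ht
  have htpos : 0 < t := div_pos hε (by linarith)
  have hy : x + t • u ∈ O := by
    refine interior_subset (hball ?_)
    rw [Metric.mem_ball, dist_eq_norm, add_sub_cancel_left, norm_smul,
      Real.norm_eq_abs, abs_of_pos htpos, hnorm_u, ht]
    rw [div_mul_eq_mul_div, mul_comm 2 d, ← div_div]
    have : ε * d / d = ε := by field_simp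
    rw [this]; linarith
  have hstrict : ⟪u, x - xbreve⟫ < 0 := by
    have h1 := hsep _ hy
    have h2 : x + t • u - xbreve = (x - xbreve) + t • u := by abel
    rw [h2, inner_add_right, real_inner_smul_right, real_inner_self_eq_norm_sq, hnorm_u,
      ← hu] at h1
    have hpos : 0 < t * d ^ 2 := mul_pos htpos (pow_pos hdpos 2)
    linarith
  -- lower bound on ⟪nvec, x - x̄⟫ via generalized Cauchy-Schwarz
  set v : Fin n → ℝ := ((x - xbar : EuclideanSpace ℝ (Fin n)) : Fin n → ℝ) with hv
  set α : ℝ := (nvec : Fin n → ℝ) ⬝ᵥ W.mulVec (nvec : Fin n → ℝ) with hα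
  have hα0 : 0 ≤ α := by
    have := hW.posSemidef.re_dotProduct_nonneg (nvec : Fin n → ℝ)
    simpa using this
  have hCS : ((nvec : Fin n → ℝ) ⬝ᵥ v)^2 ≤ α := by
    calc ((nvec : Fin n → ℝ) ⬝ᵥ v)^2 ≤ α * (v ⬝ᵥ W⁻¹.mulVec v) := gen_CS hW _ _
      _ ≤ α * 1 := by
          refine mul_le_mul_of_nonneg_left ?_ hα0
          exact hx
      _ = α := mul_one α
  have habs : |(nvec : Fin n → ℝ) ⬝ᵥ v| ≤ Real.sqrt α := Real.abs_le_sqrt hCS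
  have hlow : -d ≤ (nvec : Fin n → ℝ) ⬝ᵥ v := by
    linarith [(abs_le.1 habs).1, htight]
  -- combine
  have hinner_nu : ⟪nvec, u⟫ = d := by
    rw [hnvec, real_inner_smul_left, real_inner_self_eq_norm_sq, hnorm_u, sq]
    field_simp
  have hsplit : ⟪nvec, x - xbreve⟫ = ⟪nvec, x - xbar⟫ + d := by
    rw [← hinner_nu, ← inner_add_right]
    congr 1
    rw [hu]; abel
  have hdot : ⟪nvec, x - xbar⟫ = (nvec : Fin n → ℝ) ⬝ᵥ v := inner_eq_dot _ _
  have hscale : ⟪nvec, x - xbreve⟫ = d⁻¹ * ⟪u, x - xbreve⟫ := by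
    rw [hnvec, real_inner_smul_left]
  have hpos : 0 ≤ ⟪nvec, x - xbreve⟫ := by
    rw [hsplit, hdot]; linarith
  rw [hscale] at hpos
  have : d⁻¹ * ⟪u, x - xbreve⟫ < 0 :=
    mul_neg_of_pos_of_neg (inv_pos.2 hdpos) hstrict
  linarith
end

section
/- Let M_k be symmetric matrices with m̲ I ⪯ M_k ⪯ m̄ I for some m̄ ≥ m̲ > 0, and suppose for a differentiable map φ_k : ℝⁿ → ℝⁿ with Jacobian F_k(x) the inequality F_k(x)ᵀ M_{k+1} F_k(x) ⪯ λ M_k holds for all x, with λ ∈ [0,1). Then for any two points a, b ∈ ℝⁿ and any C¹ curve c : [0,1] → ℝⁿ with c(0) = a, c(1) = b, the energy of the image curve φ_k ∘ c with respect to M_{k+1} is at most λ times the energy of c with respect to M_k, where the energy of a curve c under metric M is ∫₀¹ c'(s)ᵀ M c'(s) ds. -/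
open Matrix

lemma psd_dot {n : ℕ} {A : Matrix (Fin n) (Fin n) ℝ} (h : A.PosSemidef) (v : Fin n → ℝ) :
    0 ≤ v ⬝ᵥ A.mulVec v := by
  have := h.dotProduct_mulVec_nonneg v
  simpa using this

/-- Lemma 1, discrete-time contraction: the pointwise Jacobian
matrix inequality implies decay of the Riemann energy of curves under the
closed-loop map. -/
theorem stmt9 {n : ℕ} (M M' : Matrix (Fin n) (Fin n) ℝ)
    (mlo mhi : ℝ) (hm : 0 < mlo) (hmm : mlo ≤ mhi)
    (hMlo : (M - mlo • (1 : Matrix (Fin n) (Fin n) ℝ)).PosSemidef)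
    (hMhi : (mhi • (1 : Matrix (Fin n) (Fin n) ℝ) - M).PosSemidef)
    (hM'lo : (M' - mlo • (1 : Matrix (Fin n) (Fin n) ℝ)).PosSemidef)
    (hM'hi : (mhi • (1 : Matrix (Fin n) (Fin n) ℝ) - M').PosSemidef)
    (hMsymm : M.IsSymm) (hM'symm : M'.IsSymm)
    (phi : (Fin n → ℝ) → (Fin n → ℝ)) (F : (Fin n → ℝ) → Matrix (Fin n) (Fin n) ℝ)
    (hphi : ∀ x, HasFDerivAt phi ((F x).mulVecLin.toContinuousLinearMap) x)
    (lam : ℝ) (hlam : 0 ≤ lam) (hlam1 : lam < 1)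
    (hcontr : ∀ x, (lam • M - (F x)ᵀ * M' * F x).PosSemidef)
    (a b : Fin n → ℝ) (c c' : ℝ → Fin n → ℝ)
    (hc : ∀ s, HasDerivAt c (c' s) s) (hc' : Continuous c')
    (hc0 : c 0 = a) (hc1 : c 1 = b) :
    ∫ s in (0:ℝ)..1, ((F (c s)).mulVec (c' s)) ⬝ᵥ M'.mulVec ((F (c s)).mulVec (c' s))
      ≤ lam * ∫ s in (0:ℝ)..1, (c' s) ⬝ᵥ M.mulVec (c' s) := by
  -- pointwise inequality
  have hpt : ∀ s : ℝ, ((F (c s)).mulVec (c' s)) ⬝ᵥ M'.mulVec ((F (c s)).mulVec (c' s))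
      ≤ lam * ((c' s) ⬝ᵥ M.mulVec (c' s)) := by
    intro s
    have h0 := psd_dot (hcontr (c s)) (c' s)
    set A := F (c s)
    set v := c' s
    have key : v ⬝ᵥ (lam • M - Aᵀ * M' * A).mulVec v
        = lam * (v ⬝ᵥ M.mulVec v) - (A.mulVec v) ⬝ᵥ M'.mulVec (A.mulVec v) := by
      rw [Matrix.sub_mulVec, dotProduct_sub, Matrix.smul_mulVec, dotProduct_smul,
        ← Matrix.mulVec_mulVec, ← Matrix.mulVec_mulVec, Matrix.dotProduct_mulVec v Aᵀ,
        Matrix.vecMul_transpose, smul_eq_mul]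
    rw [key] at h0
    linarith
  have hMpsd : ∀ v : Fin n → ℝ, 0 ≤ v ⬝ᵥ M.mulVec v := by
    intro v
    have h1 := psd_dot hMlo v
    have : v ⬝ᵥ (M - mlo • (1 : Matrix (Fin n) (Fin n) ℝ)).mulVec v
        = v ⬝ᵥ M.mulVec v - mlo * (v ⬝ᵥ v) := by
      rw [Matrix.sub_mulVec, dotProduct_sub, Matrix.smul_mulVec, dotProduct_smul,
        Matrix.one_mulVec, smul_eq_mul]
    rw [this] at h1
    have h2 : 0 ≤ v ⬝ᵥ v := by
      simp only [dotProduct]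
      exact Finset.sum_nonneg fun i _ => mul_self_nonneg _
    nlinarith
  have hcont : Continuous fun s => (c' s) ⬝ᵥ M.mulVec (c' s) := by
    simp only [dotProduct, Matrix.mulVec]
    exact continuous_finset_sum _ fun i _ => (((continuous_apply i).comp hc')).mul
      (continuous_finset_sum _ fun j _ => (continuous_const.mul ((continuous_apply j).comp hc')))
  have hRint : IntervalIntegrable (fun s => (c' s) ⬝ᵥ M.mulVec (c' s))
      MeasureTheory.volume 0 1 := hcont.intervalIntegrable 0 1
  have hRnn : 0 ≤ ∫ s in (0:ℝ)..1, (c' s) ⬝ᵥ M.mulVec (c' s) :=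
    intervalIntegral.integral_nonneg (by norm_num) (fun s _ => hMpsd (c' s))
  by_cases hI : IntervalIntegrable
      (fun s => ((F (c s)).mulVec (c' s)) ⬝ᵥ M'.mulVec ((F (c s)).mulVec (c' s)))
      MeasureTheory.volume 0 1
  · calc ∫ s in (0:ℝ)..1, ((F (c s)).mulVec (c' s)) ⬝ᵥ M'.mulVec ((F (c s)).mulVec (c' s))
        ≤ ∫ s in (0:ℝ)..1, lam * ((c' s) ⬝ᵥ M.mulVec (c' s)) := by
          apply intervalIntegral.integral_mono_on (by norm_num) hI
            (hRint.const_mul lam)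
          exact fun s _ => hpt s
      _ = lam * ∫ s in (0:ℝ)..1, (c' s) ⬝ᵥ M.mulVec (c' s) := by
          rw [intervalIntegral.integral_const_mul]
  · rw [intervalIntegral.integral_undef hI]
    positivity
end
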